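/- Let Λ be the Mukai lattice ℤ ⊕ L ⊕ ℤ with L = L₀ ⊕ L₀ ⊕ U ⊕ U ⊕ U and T = e^β ∘ τ as above (β = e+f in the third U, L₀ even), and let φ : Λ → Λ be an isometry of the Mukai pairing commuting with T. Then for every ℓ ∈ L embedded as (0, ℓ, 0), the pairing ⟨φ(0,0,1), (0,ℓ,0)⟩ is even; equivalently, the L-component of φ(0,0,1) pairs evenly with all of L. -/

import Mathlib

/-- The hyperbolic plane form on `U = ℤ × ℤ`. -/
def Ubil (z w : ℤ × ℤ) : ℤ := z.1 * w.2 + z.2 * w.1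

/-- The lattice `L = L₀ ⊕ L₀ ⊕ U ⊕ U ⊕ U`. -/
abbrev LatE (L₀ : Type*) := L₀ × L₀ × (ℤ × ℤ) × (ℤ × ℤ) × (ℤ × ℤ)

/-- The orthogonal direct sum form on `L = L₀ ⊕ L₀ ⊕ U ⊕ U ⊕ U`. -/
def Lbil {L₀ : Type*} [AddCommGroup L₀] [Module ℤ L₀]
    (B₀ : L₀ →ₗ[ℤ] L₀ →ₗ[ℤ] ℤ) (a b : LatE L₀) : ℤ :=
  B₀ a.1 b.1 + B₀ a.2.1 b.2.1 + Ubil a.2.2.1 b.2.2.1 +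
    Ubil a.2.2.2.1 b.2.2.2.1 + Ubil a.2.2.2.2 b.2.2.2.2

/-- The involution `τ(x,y,z₁,z₂,z₃) = (y,x,z₂,z₁,−z₃)`. -/
def tauL {L₀ : Type*} [AddCommGroup L₀] (a : LatE L₀) : LatE L₀ :=
  (a.2.1, a.1, a.2.2.2.1, a.2.2.1, -a.2.2.2.2)

/-- The Mukai lattice `Λ = ℤ ⊕ L ⊕ ℤ`. -/
abbrev Muk (L₀ : Type*) := ℤ × LatE L₀ × ℤ

/-- The Mukai pairing `⟨(r,c,s),(r',c',s')⟩ = ⟨c,c'⟩ − rs' − r's`. -/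
def mukai {L₀ : Type*} [AddCommGroup L₀] [Module ℤ L₀]
    (B₀ : L₀ →ₗ[ℤ] L₀ →ₗ[ℤ] ℤ) (v w : Muk L₀) : ℤ :=
  Lbil B₀ v.2.1 w.2.1 - v.1 * w.2.2 - w.1 * v.2.2

/-- The B-field `β = e + f` in the third `U` summand. -/
def betaL (L₀ : Type*) [AddCommGroup L₀] : LatE L₀ :=
  (0, 0, 0, 0, (1, 1))

/-- `T = e^β ∘ τ` on the Mukai lattice, where `e^β(r,c,s) = (r, c + rβ, s + ⟨c,β⟩ + r)`
(using `⟨β,β⟩ = 2`). -/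
def Tmuk {L₀ : Type*} [AddCommGroup L₀] [Module ℤ L₀]
    (B₀ : L₀ →ₗ[ℤ] L₀ →ₗ[ℤ] ℤ) (v : Muk L₀) : Muk L₀ :=
  (v.1, tauL v.2.1 + v.1 • betaL L₀,
    v.2.2 + Lbil B₀ (tauL v.2.1) (betaL L₀) + v.1)

/-!
The quadratic form `v ↦ ⟨v, T v⟩` reduces modulo 2 to the rank `r` of `v = (r, c, s)`: the swap
in `τ` pairs the two copies of `L₀` and the first two copies of `U` into twice
`B₀(x, y) + ⟨z₁, z₂⟩`, and the remaining terms are `2r⟨z₃, e + f⟩ − 2z₃ᵉz₃ᶠ − 2rs − r²`.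
An isometry `φ` commuting with `T` preserves this form, hence the parity of the rank.
Since `⟨(0,0,1), w⟩ = −rk w`, applying this to `w = φ⁻¹(0, ℓ, 0)` gives
`⟨φ(0,0,1), (0,ℓ,0)⟩ = −rk w ≡ rk (0, ℓ, 0) = 0`.
-/

section

variable {L₀ : Type*} [AddCommGroup L₀] [Module ℤ L₀] (B₀ : L₀ →ₗ[ℤ] L₀ →ₗ[ℤ] ℤ)

theorem even_mukai_self_Tmuk_add_fst (hsymm : ∀ a b, B₀ a b = B₀ b a) (v : Muk L₀) :
    Even (mukai B₀ v (Tmuk B₀ v) + v.1) := by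
  obtain ⟨r, ⟨x, y, z₁, z₂, z₃⟩, s⟩ := v
  obtain ⟨k, hk⟩ := Int.even_mul_succ_self (r - 1)
  refine ⟨B₀ x y + Ubil z₁ z₂ + r * (z₃.1 + z₃.2) - z₃.1 * z₃.2 - r * s - k, ?_⟩
  simp only [mukai, Tmuk, tauL, betaL, Lbil, Ubil, Prod.fst_add, Prod.snd_add, Prod.smul_mk,
    Prod.fst_zero, Prod.snd_zero, Prod.fst_neg, Prod.snd_neg, smul_eq_mul, smul_zero, zsmul_zero, map_zero,
    mul_zero, mul_one, add_zero]
  linear_combination hsymm y x - hk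

theorem mukai_zero_zero_one (w : Muk L₀) : mukai B₀ (0, 0, 1) w = -w.1 := by
  simp [mukai, Lbil, Ubil]

theorem even_fst_sub_fst_of_isometry_of_comm_Tmuk (hsymm : ∀ a b, B₀ a b = B₀ b a)
    {φ : Muk L₀ → Muk L₀} (hφ : ∀ v w, mukai B₀ (φ v) (φ w) = mukai B₀ v w)
    (hcomm : ∀ v, φ (Tmuk B₀ v) = Tmuk B₀ (φ v)) (v : Muk L₀) :
    Even ((φ v).1 - v.1) := by
  have hform : mukai B₀ (φ v) (Tmuk B₀ (φ v)) = mukai B₀ v (Tmuk B₀ v) := by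
    rw [← hcomm, hφ]
  have h := (even_mukai_self_Tmuk_add_fst B₀ hsymm (φ v)).sub
    (even_mukai_self_Tmuk_add_fst B₀ hsymm v)
  rwa [hform, add_sub_add_left_eq_sub] at h

end

theorem degree_two_part_even_general {L₀ : Type*} [AddCommGroup L₀] [Module ℤ L₀]
    (B₀ : L₀ →ₗ[ℤ] L₀ →ₗ[ℤ] ℤ)
    (hsymm : ∀ a b, B₀ a b = B₀ b a)
    (φ : Muk L₀ ≃ₗ[ℤ] Muk L₀)
    (hφ : ∀ v w, mukai B₀ (φ v) (φ w) = mukai B₀ v w)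
    (hcomm : ∀ v, φ (Tmuk B₀ v) = Tmuk B₀ (φ v)) :
    ∀ ℓ : LatE L₀,
      Even (mukai B₀ (φ ((0 : ℤ), (0 : LatE L₀), (1 : ℤ))) ((0 : ℤ), ℓ, (0 : ℤ))) := by
  intro ℓ
  set w := φ.symm (0, ℓ, 0)
  have hw : φ w = (0, ℓ, 0) := φ.apply_symm_apply _
  have hparity := even_fst_sub_fst_of_isometry_of_comm_Tmuk B₀ hsymm hφ hcomm w
  rw [hw, zero_sub] at hparity
  rwa [← hw, hφ, mukai_zero_zero_one]

/-- If `φ` is an isometry of the Mukai lattice commuting with `T = e^β ∘ τ`, then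
`⟨φ(0,0,1), (0,ℓ,0)⟩` is even for all `ℓ ∈ L`. -/
theorem degree_two_part_even {L₀ : Type*} [AddCommGroup L₀] [Module ℤ L₀]
    (B₀ : L₀ →ₗ[ℤ] L₀ →ₗ[ℤ] ℤ)
    (hsymm : ∀ a b, B₀ a b = B₀ b a)
    (heven : ∀ a, Even (B₀ a a))
    (φ : Muk L₀ ≃ₗ[ℤ] Muk L₀)
    (hφ : ∀ v w, mukai B₀ (φ v) (φ w) = mukai B₀ v w)
    (hcomm : ∀ v, φ (Tmuk B₀ v) = Tmuk B₀ (φ v)) :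
    ∀ ℓ : LatE L₀,
      Even (mukai B₀ (φ ((0 : ℤ), (0 : LatE L₀), (1 : ℤ))) ((0 : ℤ), ℓ, (0 : ℤ))) :=
  degree_two_part_even_general B₀ hsymm φ hφ hcomm
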